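/- arXiv:1707.01560 — 2 statements merged into one kernel-verified Lean document; each statement's English description precedes it below -/
import Mathlib

section
/- Let δ₁, δ₂ be symmetric positive semidefinite real m×m matrices such that I + δ₁δ₂ is invertible. Then the matrix δ₂(I + δ₁δ₂)⁻¹ is symmetric and positive semidefinite. -/
namespace Matrix

variable {n R : Type*} [Fintype n] [DecidableEq n] [CommRing R] [StarRing R]

theorem mul_nonsing_inv_eq_conjTranspose_mul_mul {M : Matrix n n R} (hM : IsUnit M.det)
    (B : Matrix n n R) : B * M⁻¹ = M⁻¹ᴴ * (Mᴴ * B) * M⁻¹ := by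
  rw [← Matrix.mul_assoc, ← conjTranspose_mul, mul_nonsing_inv M hM, conjTranspose_one,
    Matrix.one_mul]

theorem conjTranspose_one_add_mul_mul_self {A B : Matrix n n R} (hA : A.IsHermitian)
    (hB : B.IsHermitian) : (1 + A * B)ᴴ * B = B + B * A * B := by
  rw [conjTranspose_add, conjTranspose_one, conjTranspose_mul, hA.eq, hB.eq, add_mul, one_mul]

theorem PosSemidef.mul_nonsing_inv_one_add_mul [PartialOrder R] [AddLeftMono R]
    {A B : Matrix n n R} (hB : B.PosSemidef) (hA : A.PosSemidef) :
    (B * (1 + A * B)⁻¹).PosSemidef := by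
  by_cases hM : IsUnit (1 + A * B).det
  · rw [mul_nonsing_inv_eq_conjTranspose_mul_mul hM, conjTranspose_one_add_mul_mul_self hA.1 hB.1]
    have hBAB : (B * A * B).PosSemidef := by
      simpa only [hB.1.eq] using hA.conjTranspose_mul_mul_same B
    exact (hB.add hBAB).conjTranspose_mul_mul_same _
  · -- the junk value `M⁻¹ = 0` of a singular `M`
    rw [nonsing_inv_apply_not_isUnit _ hM, Matrix.mul_zero]
    exact .zero

end Matrix

theorem stmt_2_general (m : ℕ) (δ₁ δ₂ : Matrix (Fin m) (Fin m) ℝ)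
    (hδ₁ : δ₁.PosSemidef) (hδ₂ : δ₂.PosSemidef) :
    (δ₂ * (1 + δ₁ * δ₂)⁻¹).PosSemidef :=
  hδ₂.mul_nonsing_inv_one_add_mul hδ₁

/-- If `δ₁`, `δ₂` are symmetric positive semidefinite real `m × m` matrices
such that `I + δ₁δ₂` is invertible, then `δ₂(I + δ₁δ₂)⁻¹` is symmetric and
positive semidefinite. -/
theorem stmt_2 (m : ℕ) (δ₁ δ₂ : Matrix (Fin m) (Fin m) ℝ)
    (hδ₁ : δ₁.PosSemidef) (hδ₂ : δ₂.PosSemidef)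
    (h : IsUnit (1 + δ₁ * δ₂)) :
    (δ₂ * (1 + δ₁ * δ₂)⁻¹).PosSemidef :=
  stmt_2_general m δ₁ δ₂ hδ₁ hδ₂
end

section
/- Let R₁, R₂ be symmetric positive semidefinite real n×n matrices, g₁, g₂ real n×m matrices, and δ₁, δ₂ symmetric positive semidefinite real m×m matrices such that I + δ₁δ₂ and I + δ₂δ₁ are invertible. Then the (2n)×(2n) block-diagonal matrix R̃ with diagonal blocks R₁ + g₁ δ₂(I + δ₁δ₂)⁻¹ g₁ᵀ and R₂ + g₂ δ₁(I + δ₂δ₁)⁻¹ g₂ᵀ (and zero off-diagonal blocks) is symmetric and positive semidefinite. -/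
/-!
Invertibility of `1 + δ₁δ₂` is automatic for positive semidefinite `δ₁, δ₂`: if
`x + δ₁δ₂x = 0` then `x*δ₂x = -(δ₂x)*δ₁(δ₂x) ≤ 0`, which forces `δ₂x = 0` and then `x = 0`.
The push-through identity `δ₂(1 + δ₁δ₂)⁻¹ = (1 + δ₂δ₁)⁻¹δ₂` makes `δ₂(1 + δ₁δ₂)⁻¹` Hermitian, and
substituting `x = (1 + δ₁δ₂)y` turns its quadratic form into `y*δ₂y + (δ₂y)*δ₁(δ₂y) ≥ 0`.
Congruence by `g`, adding `R` and forming block-diagonal matrices preserve semidefiniteness.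
-/

open Matrix

namespace Matrix

open scoped ComplexOrder

variable {𝕜 : Type*} [RCLike 𝕜] {m n : Type*} [Fintype m] [Fintype n]

lemma IsHermitian.star_mulVec_dotProduct {A : Matrix m m 𝕜} (hA : A.IsHermitian) (x y : m → 𝕜) :
    star (A *ᵥ x) ⬝ᵥ y = star x ⬝ᵥ A *ᵥ y := by
  rw [star_mulVec, hA.eq, dotProduct_mulVec]

lemma PosSemidef.fromBlocks_zero₁₂_zero₂₁ {A : Matrix m m 𝕜} {D : Matrix n n 𝕜}
    (hA : A.PosSemidef) (hD : D.PosSemidef) : (fromBlocks A 0 0 D).PosSemidef := by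
  rw [posSemidef_iff_dotProduct_mulVec]
  refine ⟨hA.isHermitian.fromBlocks (by simp) hD.isHermitian, fun x ↦ ?_⟩
  obtain ⟨u, v, rfl⟩ : ∃ u v, x = Sum.elim u v := ⟨_, _, (Sum.elim_comp_inl_inr x).symm⟩
  simp only [fromBlocks_mulVec, Sum.elim_comp_inl, Sum.elim_comp_inr, zero_mulVec, add_zero,
    zero_add, Function.star_sumElim, sumElim_dotProduct_sumElim]
  exact add_nonneg (hA.dotProduct_mulVec_nonneg u) (hD.dotProduct_mulVec_nonneg v)

variable [DecidableEq m]

lemma mul_inv_one_add_mul_comm {α : Type*} [CommRing α] {A B : Matrix m m α}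
    (h : IsUnit (1 + A * B)) : B * (1 + A * B)⁻¹ = (1 + B * A)⁻¹ * B := by
  have h' : IsUnit (1 + B * A) := by
    rwa [isUnit_iff_isUnit_det, det_one_add_mul_comm, ← isUnit_iff_isUnit_det]
  obtain ⟨_⟩ := h.nonempty_invertible
  obtain ⟨_⟩ := h'.nonempty_invertible
  have hcomm : (1 + B * A) * B = B * (1 + A * B) := by
    simp only [add_mul, mul_add, one_mul, mul_one, Matrix.mul_assoc]
  rw [eq_comm, inv_mul_eq_iff_eq_mul_of_invertible, ← Matrix.mul_assoc, hcomm,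
    mul_inv_cancel_right_of_invertible]

lemma PosSemidef.isUnit_one_add_mul {A B : Matrix m m 𝕜} (hA : A.PosSemidef)
    (hB : B.PosSemidef) : IsUnit (1 + A * B) := by
  rw [← mulVec_injective_iff_isUnit, ← coe_mulVecLin, injective_iff_map_eq_zero]
  intro x hx
  replace hx : x = -(A *ᵥ (B *ᵥ x)) := by
    rw [coe_mulVecLin, add_mulVec, one_mulVec, ← mulVec_mulVec] at hx
    exact eq_neg_of_add_eq_zero_left hx
  have hBx : star x ⬝ᵥ B *ᵥ x = -(star (B *ᵥ x) ⬝ᵥ A *ᵥ (B *ᵥ x)) := by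
    nth_rewrite 1 [hx]
    rw [star_neg, neg_dotProduct, hA.isHermitian.star_mulVec_dotProduct]
  have hBx_zero : star x ⬝ᵥ B *ᵥ x = 0 :=
    le_antisymm (hBx ▸ neg_nonpos.mpr (hA.dotProduct_mulVec_nonneg _))
      (hB.dotProduct_mulVec_nonneg x)
  rw [hx, (hB.dotProduct_mulVec_zero_iff x).mp hBx_zero, mulVec_zero, neg_zero]

lemma PosSemidef.mul_inv_one_add_mul {A B : Matrix m m 𝕜} (hA : A.PosSemidef)
    (hB : B.PosSemidef) : (B * (1 + A * B)⁻¹).PosSemidef := by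
  have hunit := hA.isUnit_one_add_mul hB
  rw [posSemidef_iff_dotProduct_mulVec]
  constructor
  · rw [IsHermitian, conjTranspose_mul, conjTranspose_nonsing_inv, conjTranspose_add,
      conjTranspose_one, conjTranspose_mul, hA.isHermitian.eq, hB.isHermitian.eq,
      mul_inv_one_add_mul_comm hunit]
  · intro x
    set y := (1 + A * B)⁻¹ *ᵥ x
    have hx : x = y + A *ᵥ (B *ᵥ y) :=
      calc x = (1 + A * B) *ᵥ y := by
            rw [mulVec_mulVec, mul_nonsing_inv _ ((isUnit_iff_isUnit_det _).mp hunit),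
              one_mulVec]
        _ = y + A *ᵥ (B *ᵥ y) := by rw [add_mulVec, one_mulVec, ← mulVec_mulVec]
    have hBy : (B * (1 + A * B)⁻¹) *ᵥ x = B *ᵥ y := (mulVec_mulVec _ _ _).symm
    rw [hBy, hx, star_add, add_dotProduct, hA.isHermitian.star_mulVec_dotProduct]
    exact add_nonneg (hB.dotProduct_mulVec_nonneg y) (hA.dotProduct_mulVec_nonneg _)

end Matrix

theorem stmt_3_general (n m : ℕ) (R₁ R₂ : Matrix (Fin n) (Fin n) ℝ)
    (hR₁ : R₁.PosSemidef) (hR₂ : R₂.PosSemidef)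
    (g₁ g₂ : Matrix (Fin n) (Fin m) ℝ)
    (δ₁ δ₂ : Matrix (Fin m) (Fin m) ℝ)
    (hδ₁ : δ₁.PosSemidef) (hδ₂ : δ₂.PosSemidef) :
    (Matrix.fromBlocks
        (R₁ + g₁ * (δ₂ * (1 + δ₁ * δ₂)⁻¹) * g₁ᵀ) 0
        0 (R₂ + g₂ * (δ₁ * (1 + δ₂ * δ₁)⁻¹) * g₂ᵀ)).PosSemidef := by
  have h₁ := (hδ₁.mul_inv_one_add_mul hδ₂).mul_mul_conjTranspose_same g₁
  have h₂ := (hδ₂.mul_inv_one_add_mul hδ₁).mul_mul_conjTranspose_same g₂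
  rw [conjTranspose_eq_transpose_of_trivial] at h₁ h₂
  exact (hR₁.add h₁).fromBlocks_zero₁₂_zero₂₁ (hR₂.add h₂)

/-- If `R₁`, `R₂` are symmetric positive semidefinite `n × n` matrices, `g₁`,
`g₂` are `n × m` matrices, and `δ₁`, `δ₂` are symmetric positive semidefinite
`m × m` matrices with `I + δ₁δ₂` and `I + δ₂δ₁` invertible, then the block
diagonal matrix with blocks `R₁ + g₁δ₂(I+δ₁δ₂)⁻¹g₁ᵀ` and
`R₂ + g₂δ₁(I+δ₂δ₁)⁻¹g₂ᵀ` is symmetric and positive semidefinite. -/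
theorem stmt_3 (n m : ℕ) (R₁ R₂ : Matrix (Fin n) (Fin n) ℝ)
    (hR₁ : R₁.PosSemidef) (hR₂ : R₂.PosSemidef)
    (g₁ g₂ : Matrix (Fin n) (Fin m) ℝ)
    (δ₁ δ₂ : Matrix (Fin m) (Fin m) ℝ)
    (hδ₁ : δ₁.PosSemidef) (hδ₂ : δ₂.PosSemidef)
    (h₁₂ : IsUnit (1 + δ₁ * δ₂)) (h₂₁ : IsUnit (1 + δ₂ * δ₁)) :
    (Matrix.fromBlocks
        (R₁ + g₁ * (δ₂ * (1 + δ₁ * δ₂)⁻¹) * g₁ᵀ) 0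
        0 (R₂ + g₂ * (δ₁ * (1 + δ₂ * δ₁)⁻¹) * g₂ᵀ)).PosSemidef :=
  stmt_3_general n m R₁ R₂ hR₁ hR₂ g₁ g₂ δ₁ δ₂ hδ₁ hδ₂
end
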